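/- arXiv:2204.07223 — 6 statements merged into one kernel-verified Lean document; each statement's English description precedes it below -/
import Mathlib

section
/- For any costs 0 < t_1 ≤ t_2 ≤ ⋯ ≤ t_n and any indices 1 ≤ k < k' ≤ n, the allocation probabilities satisfy p_k^K / p_{k'}^K ≥ p_k^P / p_{k'}^P; equivalently, p_k^K · p_{k'}^P ≥ p_k^P · p_{k'}^K. -/
open MeasureTheory Finset

/-- Allocation probability of mechanism K for machine `k`, on sorted costs with `t 0` minimal:
`p_k^K = (1/t_k) · ∫_0^{t_1} ∏_{i ≠ k} (1 − x/t_i) dx`. -/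
noncomputable def pK {n : ℕ} [NeZero n] (t : Fin n → ℝ) (k : Fin n) : ℝ :=
  (1 / t k) * ∫ x in (0:ℝ)..(t 0), ∏ i ∈ univ.erase k, (1 - x / t i)

/-- Allocation probability of mechanism P for machine `k`:
`p_k^P = (1/t_k) / (∑_i 1/t_i)`. -/
noncomputable def pP {n : ℕ} (t : Fin n → ℝ) (k : Fin n) : ℝ :=
  (1 / t k) / (∑ i, 1 / t i)

/-- For sorted costs `0 < t 0 ≤ ⋯ ≤ t (n-1)` (with `n ≥ 2`) and indices `k < k'`,
`p_k^K / p_{k'}^K ≥ p_k^P / p_{k'}^P`, equivalently `p_k^K · p_{k'}^P ≥ p_k^P · p_{k'}^K`. -/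
theorem mechanismK_ratio_dominates_mechanismP
    (n : ℕ) [NeZero n] (hn : 2 ≤ n) (t : Fin n → ℝ)
    (hpos : 0 < t 0) (hmono : Monotone t)
    (k k' : Fin n) (hkk' : k < k') :
    pK t k * pP t k' ≥ pP t k * pK t k' := by
  have hpos' : ∀ i, 0 < t i := fun i => lt_of_lt_of_le hpos (hmono (Fin.zero_le i))
  have hS : 0 < ∑ i, 1 / t i :=
    Finset.sum_pos (fun i _ => one_div_pos.mpr (hpos' i)) ⟨0, mem_univ 0⟩
  have hI : (∫ x in (0:ℝ)..(t 0), ∏ i ∈ univ.erase k', (1 - x / t i))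
      ≤ ∫ x in (0:ℝ)..(t 0), ∏ i ∈ univ.erase k, (1 - x / t i) := by
    apply intervalIntegral.integral_mono_on hpos.le
    · exact Continuous.intervalIntegrable (by continuity) _ _
    · exact Continuous.intervalIntegrable (by continuity) _ _
    · intro x hx
      have hxt : ∀ i, 0 ≤ 1 - x / t i := by
        intro i
        have : x / t i ≤ 1 := by
          rw [div_le_one (hpos' i)]
          exact hx.2.trans (hmono (Fin.zero_le i))
        linarith
      have hk'mem : k' ∈ univ.erase k := mem_erase.mpr ⟨hkk'.ne', mem_univ _⟩
      have hkmem : k ∈ univ.erase k' := mem_erase.mpr ⟨hkk'.ne, mem_univ _⟩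
      rw [← Finset.mul_prod_erase _ _ hk'mem, ← Finset.mul_prod_erase _ _ hkmem,
        Finset.erase_right_comm]
      apply mul_le_mul_of_nonneg_right
      · have : x / t k' ≤ x / t k :=
          div_le_div_of_nonneg_left hx.1 (hpos' k) (hmono hkk'.le)
        linarith
      · exact Finset.prod_nonneg fun i _ => hxt i
  have key : pK t k * pP t k' - pP t k * pK t k' =
      (1 / t k) * (1 / t k') / (∑ i, 1 / t i) *
        ((∫ x in (0:ℝ)..(t 0), ∏ i ∈ univ.erase k, (1 - x / t i))
          - ∫ x in (0:ℝ)..(t 0), ∏ i ∈ univ.erase k', (1 - x / t i)) := by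
    unfold pK pP; ring
  have h1 : 0 ≤ (1 / t k) * (1 / t k') / (∑ i, 1 / t i) := div_nonneg (mul_nonneg (one_div_nonneg.mpr (hpos' k).le) (one_div_nonneg.mpr (hpos' k').le)) hS.le
  nlinarith [mul_nonneg h1 (sub_nonneg.mpr hI)]
end

section
/- For any costs 0 < t_1 ≤ t_2 ≤ ⋯ ≤ t_n, there exists an index l with 1 ≤ l ≤ n such that p_k^K ≥ p_k^P for all k ≤ l and p_k^K < p_k^P for all k > l. -/
open MeasureTheory Finset

/-!
Write `p_k^K = I_k / t_k` with `I_k = ∫_0^{t_1} ∏_{i ≠ k} (1 - x/t_i) dx`, and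
`p_k^P = (1/t_k) / S` with `S = ∑ 1/t_i`; then `p_k^K ≥ p_k^P` iff `I_k ≥ 1/S`. The integrals `I_k`
decrease in `k`, since the factor left out of the product, `1 - x/t_k`, grows with `k`. Both
mechanisms are probability distributions (the integrand of `∑_k p_k^K` is `-d/dx ∏_i (1 - x/t_i)`),
so `I_k ≥ 1/S` for some `k`, and the threshold `l` is the last index with `I_l ≥ 1/S`.
-/

section ProdErase

variable {ι : Type*} [DecidableEq ι]

theorem hasDerivAt_prod_one_sub_div (s : Finset ι) (t : ι → ℝ) (x : ℝ) :
    HasDerivAt (fun y => ∏ i ∈ s, (1 - y / t i))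
      (-∑ k ∈ s, 1 / t k * ∏ i ∈ s.erase k, (1 - x / t i)) x := by
  have hfactor : ∀ i ∈ s, HasDerivAt (fun y => 1 - y / t i) (-(1 / t i)) x := fun i _ => by
    simpa [one_div] using ((hasDerivAt_id x).div_const (t i)).const_sub 1
  refine (HasDerivAt.fun_finsetProd hfactor).congr_deriv ?_
  simp only [smul_eq_mul, neg_mul, sum_neg_distrib, mul_comm]

theorem integral_sum_inv_mul_prod_erase (s : Finset ι) (t : ι → ℝ) (a b : ℝ) :
    ∫ x in a..b, ∑ k ∈ s, 1 / t k * ∏ i ∈ s.erase k, (1 - x / t i)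
      = ∏ i ∈ s, (1 - a / t i) - ∏ i ∈ s, (1 - b / t i) := by
  rw [intervalIntegral.integral_eq_sub_of_hasDerivAt
    (fun x _ => (hasDerivAt_prod_one_sub_div s t x).fun_neg.congr_deriv (neg_neg _))
    (Continuous.intervalIntegrable (by fun_prop) a b)]
  ring

theorem prod_erase_le_prod_erase {R : Type*} [CommSemiring R] [PartialOrder R]
    [IsOrderedRing R] {s : Finset ι} {f : ι → R} (hf : ∀ i ∈ s, 0 ≤ f i) {j k : ι}
    (hj : j ∈ s) (hk : k ∈ s) (hjk : f j ≤ f k) :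
    ∏ i ∈ s.erase k, f i ≤ ∏ i ∈ s.erase j, f i := by
  rcases eq_or_ne j k with rfl | hne
  · rfl
  rw [← mul_prod_erase _ _ (mem_erase.2 ⟨hne, hj⟩),
    ← mul_prod_erase _ _ (mem_erase.2 ⟨hne.symm, hk⟩), erase_right_comm]
  exact mul_le_mul_of_nonneg_right hjk
    (prod_nonneg fun i hi => hf i (mem_of_mem_erase (mem_of_mem_erase hi)))

end ProdErase

theorem Antitone.exists_threshold {ι : Type*} [LinearOrder ι] [Finite ι]
    {α : Type*} [LinearOrder α] {f : ι → α} (hf : Antitone f) {c : α} (hc : ∃ k, c ≤ f k) :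
    ∃ l, (∀ k ≤ l, c ≤ f k) ∧ ∀ k, l < k → f k < c := by
  obtain ⟨l, hl, hmax⟩ := Set.Finite.exists_maximal (Set.toFinite {k | c ≤ f k}) hc
  exact ⟨l, fun k hk => hl.trans (hf hk),
    fun k hlk => not_le.1 fun hk => (hmax hk hlk.le).not_gt hlk⟩

theorem sum_pP_eq_one {n : ℕ} {t : Fin n → ℝ} (h : ∑ i, 1 / t i ≠ 0) : ∑ k, pP t k = 1 := by
  simp only [pP, ← sum_div, div_self h]

section Mechanisms

variable {n : ℕ} [NeZero n] (t : Fin n → ℝ)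

noncomputable def pKIntegral (k : Fin n) : ℝ :=
  ∫ x in (0:ℝ)..(t 0), ∏ i ∈ univ.erase k, (1 - x / t i)

theorem sum_pK_eq_one (h0 : t 0 ≠ 0) : ∑ k, pK t k = 1 := by
  have hint : ∀ k, IntervalIntegrable (fun x => 1 / t k * ∏ i ∈ univ.erase k, (1 - x / t i))
      volume 0 (t 0) := fun k => Continuous.intervalIntegrable (by fun_prop) _ _
  simp only [pK, ← intervalIntegral.integral_const_mul]
  rw [← intervalIntegral.integral_finsetSum fun k _ => hint k,
    integral_sum_inv_mul_prod_erase, prod_eq_zero (f := fun i => 1 - t 0 / t i) (mem_univ 0)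
    (sub_eq_zero.2 (div_self h0).symm)]
  simp

theorem pKIntegral_antitone (hpos : 0 < t 0) (hmono : Monotone t) : Antitone (pKIntegral t) := by
  intro j k hjk
  refine intervalIntegral.integral_mono_on hpos.le (Continuous.intervalIntegrable (by fun_prop) _ _)
    (Continuous.intervalIntegrable (by fun_prop) _ _) fun x ⟨hx0, hxt⟩ => ?_
  have ht : ∀ i, 0 < t i := fun i => hpos.trans_le (hmono (Fin.zero_le i))
  refine prod_erase_le_prod_erase (fun i _ => ?_) (mem_univ j) (mem_univ k) ?_
  · exact sub_nonneg.2 ((div_le_one (ht i)).2 (hxt.trans (hmono (Fin.zero_le i))))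
  · exact sub_le_sub_left (div_le_div_of_nonneg_left hx0 (ht j) (hmono hjk)) 1

theorem pP_le_pK_iff {k : Fin n} (hk : 0 < t k) :
    pP t k ≤ pK t k ↔ (∑ i, 1 / t i)⁻¹ ≤ pKIntegral t k := by
  rw [pP, pK, pKIntegral, div_eq_mul_inv, mul_le_mul_iff_right₀ (one_div_pos.2 hk)]

theorem exists_pP_le_pK (hpos : 0 < t 0) (hmono : Monotone t) : ∃ k, pP t k ≤ pK t k := by
  have hS : 0 < ∑ i, 1 / t i :=
    sum_pos (fun i _ => one_div_pos.2 (hpos.trans_le (hmono (Fin.zero_le i)))) univ_nonempty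
  obtain ⟨k, -, hk⟩ := exists_le_of_sum_le univ_nonempty
    (f := pP t) (g := pK t) (by rw [sum_pP_eq_one hS.ne', sum_pK_eq_one t hpos.ne'])
  exact ⟨k, hk⟩

end Mechanisms

theorem mechanismK_mechanismP_threshold_general
    (n : ℕ) [NeZero n] (t : Fin n → ℝ)
    (hpos : 0 < t 0) (hmono : Monotone t) :
    ∃ l : Fin n, (∀ k : Fin n, k ≤ l → pK t k ≥ pP t k) ∧
      (∀ k : Fin n, l < k → pK t k < pP t k) := by
  have ht : ∀ i, 0 < t i := fun i => hpos.trans_le (hmono (Fin.zero_le i))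
  obtain ⟨k₀, hk₀⟩ := exists_pP_le_pK t hpos hmono
  obtain ⟨l, hle, hlt⟩ := (pKIntegral_antitone t hpos hmono).exists_threshold
    ⟨k₀, (pP_le_pK_iff t (ht k₀)).1 hk₀⟩
  exact ⟨l, fun k hk => (pP_le_pK_iff t (ht k)).2 (hle k hk),
    fun k hk => not_le.1 fun h => (hlt k hk).not_ge ((pP_le_pK_iff t (ht k)).1 h)⟩

/-- For sorted costs `0 < t 0 ≤ ⋯ ≤ t (n-1)` (with `n ≥ 2`), there exists a
threshold index `l` such that `p_k^K ≥ p_k^P` for all `k ≤ l` and `p_k^K < p_k^P` for `k > l`. -/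
theorem mechanismK_mechanismP_threshold
    (n : ℕ) [NeZero n] (hn : 2 ≤ n) (t : Fin n → ℝ)
    (hpos : 0 < t 0) (hmono : Monotone t) :
    ∃ l : Fin n, (∀ k : Fin n, k ≤ l → pK t k ≥ pP t k) ∧
      (∀ k : Fin n, l < k → pK t k < pP t k) :=
  mechanismK_mechanismP_threshold_general n t hpos hmono
end

section
/- Let s > 0, let ν be a probability distribution on [s, ∞), and let X_2, …, X_n (n ≥ 2) be independent random variables each distributed according to ν. Set μ = E_{X∼ν}[s/X] and assume 0 < μ < 1. Then the expected social cost of mechanism K on the input (s, X_2, …, X_n) equals (s/μ) · [ 1 − (1/n) · (1 − μ)(1 − (1 − μ)^n)/μ ]. -/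
/-!
On the event `∀ i, s ≤ X i` the minimum cost is `X 0 = s`, so the social cost is
`∑ k, ∫ x in 0..s, ∏ i ≠ k, (1 - x / X i)`. After Fubini, independence factorises the
expectation of each product into `∏ i ≠ k, (1 - x * c i)` with rates `c 0 = 1 / s` and
`c i = E[1 / X i] = μ / s` otherwise. Because all rates but one agree, the resulting sum is,
up to a multiple of `(1 - μ x / s) ^ (n - 1)`, the derivative of `-∏ i, (1 - x * c i)`,
which vanishes at `x = s`; the rest is an integral of a power.
-/

open MeasureTheory ProbabilityTheory Finset

/-- Social cost of mechanism K on a cost vector `t` (whose minimum is `⨅ i, t i`):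
`SC_K(t) = ∑_k p_k^K · t_k` with `p_k^K = (1/t_k) · ∫_0^{min t} ∏_{i ≠ k} (1 − x/t_i) dx`. -/
noncomputable def SCK (n : ℕ) (t : Fin n → ℝ) : ℝ :=
  ∑ k, ((1 / t k) * ∫ x in (0:ℝ)..(⨅ i, t i), ∏ i ∈ univ.erase k, (1 - x / t i)) * t k

theorem SCK_eq_sum_intervalIntegral {n : ℕ} {t : Fin n → ℝ} (ht : ∀ i, t i ≠ 0) :
    SCK n t = ∑ k, ∫ x in (0:ℝ)..(⨅ i, t i), ∏ i ∈ univ.erase k, (1 - x / t i) :=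
  sum_congr rfl fun k _ => by
    rw [one_div, mul_comm, ← mul_assoc, mul_inv_cancel₀ (ht k), one_mul]

theorem ciInf_eq_of_apply_eq_of_le {ι : Type*} {t : ι → ℝ} {i₀ : ι} {s : ℝ}
    (h₀ : t i₀ = s) (ht : ∀ i, s ≤ t i) : ⨅ i, t i = s :=
  have : Nonempty ι := ⟨i₀⟩
  (show IsLeast (Set.range t) s from ⟨⟨i₀, h₀⟩, Set.forall_mem_range.2 ht⟩).isGLB.ciInf_eq

theorem abs_prod_one_sub_div_le_one {ι : Type*} (S : Finset ι) {t : ι → ℝ} {x s : ℝ}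
    (hx : 0 ≤ x) (hxs : x ≤ s) (ht : ∀ i, s ≤ t i) : |∏ i ∈ S, (1 - x / t i)| ≤ 1 := by
  have ht₀ : ∀ i, 0 ≤ t i := fun i => hx.trans (hxs.trans (ht i))
  have hle : ∀ i, x / t i ≤ 1 := fun i => div_le_one_of_le₀ (hxs.trans (ht i)) (ht₀ i)
  have hnonneg : ∀ i, 0 ≤ x / t i := fun i => div_nonneg hx (ht₀ i)
  rw [abs_of_nonneg (prod_nonneg fun i _ => sub_nonneg.2 (hle i))]
  exact prod_le_one (fun i _ => sub_nonneg.2 (hle i)) fun i _ => sub_le_self _ (hnonneg i)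

theorem hasDerivAt_prod_one_sub_mul {ι : Type*} [DecidableEq ι] (S : Finset ι) (c : ι → ℝ)
    (x : ℝ) : HasDerivAt (fun x => ∏ i ∈ S, (1 - x * c i))
      (-∑ k ∈ S, c k * ∏ i ∈ S.erase k, (1 - x * c i)) x := by
  refine (HasDerivAt.fun_finsetProd (f := fun i x => 1 - x * c i) (f' := fun i => -c i)
    fun i _ => by simpa using ((hasDerivAt_id x).mul_const (c i)).const_sub 1).congr_deriv ?_
  simp only [smul_eq_mul, mul_neg, sum_neg_distrib, mul_comm (c _)]

theorem integral_one_sub_mul_pow {s a : ℝ} (ha : a ≠ 0) (m : ℕ) :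
    ∫ x in (0:ℝ)..s, (1 - x * a) ^ m = (1 - (1 - s * a) ^ (m + 1)) / (a * (m + 1)) := by
  simp_rw [mul_comm _ a]
  rw [intervalIntegral.integral_comp_sub_mul (fun y => y ^ m) ha, integral_pow]
  simp only [mul_zero, sub_zero, one_pow, smul_eq_mul]
  field_simp

theorem integral_sum_prod_erase_one_sub_mul {n : ℕ} [NeZero n] {s μ : ℝ} (hs : s ≠ 0)
    (hμ : μ ≠ 0) {c : Fin n → ℝ} (hc₀ : c 0 = s⁻¹) (hc : ∀ i, i ≠ 0 → c i = μ / s) :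
    ∫ x in (0:ℝ)..s, ∑ k, ∏ i ∈ univ.erase k, (1 - x * c i)
      = (s / μ) * (1 - (1 / (n : ℝ)) * ((1 - μ) * (1 - (1 - μ) ^ n) / μ)) := by
  have hprod₀ : ∀ x : ℝ, ∏ i ∈ univ.erase 0, (1 - x * c i) = (1 - x * (μ / s)) ^ (n - 1) :=
    fun x => by
      rw [prod_congr rfl fun i hi => by rw [hc i (ne_of_mem_erase hi)], prod_const,
        card_erase_of_mem (mem_univ _), card_univ, Fintype.card_fin]
  have hsplit : ∀ x : ℝ, ∑ k, ∏ i ∈ univ.erase k, (1 - x * c i)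
      = s / μ * ∑ k, c k * ∏ i ∈ univ.erase k, (1 - x * c i)
        - (1 - μ) / μ * (1 - x * (μ / s)) ^ (n - 1) := fun x => by
    have hrest : ∑ k ∈ univ.erase 0, c k * ∏ i ∈ univ.erase k, (1 - x * c i)
        = μ / s * ∑ k ∈ univ.erase 0, ∏ i ∈ univ.erase k, (1 - x * c i) := by
      rw [mul_sum]
      exact sum_congr rfl fun k hk => by rw [hc k (ne_of_mem_erase hk)]
    rw [← add_sum_erase _ _ (mem_univ 0), ← add_sum_erase _ _ (mem_univ 0), hrest, hc₀, hprod₀]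
    field_simp
    ring
  have hderiv : ∫ x in (0:ℝ)..s, ∑ k, c k * ∏ i ∈ univ.erase k, (1 - x * c i) = 1 := by
    rw [intervalIntegral.integral_eq_sub_of_hasDerivAt
      (fun x _ => by simpa using (hasDerivAt_prod_one_sub_mul univ c x).neg)
      ((by fun_prop : Continuous _).intervalIntegrable _ _)]
    have : ∏ i, (1 - s * c i) = 0 :=
      prod_eq_zero (mem_univ 0) (by rw [hc₀, mul_inv_cancel₀ hs, sub_self])
    simp [this]
  simp_rw [hsplit]
  rw [intervalIntegral.integral_sub ((by fun_prop : Continuous _).intervalIntegrable _ _)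
      ((by fun_prop : Continuous _).intervalIntegrable _ _), intervalIntegral.integral_const_mul,
    intervalIntegral.integral_const_mul, hderiv, integral_one_sub_mul_pow (div_ne_zero hμ hs),
    Nat.sub_add_cancel NeZero.one_le, Nat.cast_pred (Nat.pos_of_neZero n), sub_add_cancel,
    mul_div_cancel₀ _ hs]
  field_simp

section Expectation

variable {Ω ι : Type*} [MeasureSpace Ω] [Fintype ι] {X : ι → Ω → ℝ}

theorem ProbabilityTheory.iIndepFun.integral_finset_prod_comp (hX : iIndepFun X ℙ)
    (hmeas : ∀ i, Measurable (X i)) {f : ι → ℝ → ℝ} (hf : ∀ i, Measurable (f i)) (S : Finset ι) :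
    ∫ ω, ∏ i ∈ S, f i (X i ω) = ∏ i ∈ S, ∫ ω, f i (X i ω) := by
  classical
  have := hX.isProbabilityMeasure
  have key := hX.integral_fun_prod_comp (f := fun i y => if i ∈ S then f i y else 1)
    (fun i => (hmeas i).aemeasurable)
    fun i => ((hf i).ite (MeasurableSet.const _) measurable_const).aestronglyMeasurable
  have hite : ∀ i, ∫ ω, (if i ∈ S then f i (X i ω) else 1)
      = if i ∈ S then ∫ ω, f i (X i ω) else 1 := fun i => by split_ifs <;> simp
  simpa [hite, prod_ite_mem] using key

theorem integral_prod_one_sub_div (hX : iIndepFun X ℙ) (hmeas : ∀ i, Measurable (X i))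
    (hinv : ∀ i, Integrable (fun ω => (X i ω)⁻¹)) (S : Finset ι) (x : ℝ) :
    ∫ ω, ∏ i ∈ S, (1 - x / X i ω) = ∏ i ∈ S, (1 - x * ∫ ω, (X i ω)⁻¹) := by
  have := hX.isProbabilityMeasure
  rw [hX.integral_finset_prod_comp hmeas (f := fun i y => 1 - x / y) (fun i => by fun_prop)]
  refine prod_congr rfl fun i _ => ?_
  simp_rw [div_eq_mul_inv]
  rw [integral_sub (integrable_const 1) ((hinv i).const_mul x), integral_const_mul]
  simp

end Expectation

section Fubini

variable {Ω ι : Type*} [MeasureSpace Ω] [IsFiniteMeasure (ℙ : Measure Ω)] {X : ι → Ω → ℝ}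
  {s : ℝ}

theorem integrable_uncurry_prod_one_sub_div (hmeas : ∀ i, Measurable (X i)) (hs : 0 ≤ s)
    (hae : ∀ᵐ ω ∂ℙ, ∀ i, s ≤ X i ω) (S : Finset ι) :
    Integrable (Function.uncurry fun x ω => ∏ i ∈ S, (1 - x / X i ω))
      ((volume.restrict (Set.uIoc 0 s)).prod ℙ) := by
  rw [Set.uIoc_of_le hs]
  refine Integrable.mono' (integrable_const 1) ?_ ?_
  · refine (Finset.measurable_prod _ fun i _ => ?_).aestronglyMeasurable
    exact measurable_const.sub (measurable_fst.div ((hmeas i).comp measurable_snd))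
  · filter_upwards [Measure.quasiMeasurePreserving_snd.ae hae,
      Measure.quasiMeasurePreserving_fst.ae (ae_restrict_mem measurableSet_Ioc)] with z hX hx
    exact abs_prod_one_sub_div_le_one S hx.1.le hx.2 hX

theorem integrable_intervalIntegral_prod_one_sub_div (hmeas : ∀ i, Measurable (X i))
    (hs : 0 ≤ s) (hae : ∀ᵐ ω ∂ℙ, ∀ i, s ≤ X i ω) (S : Finset ι) :
    Integrable (fun ω => ∫ x in (0:ℝ)..s, ∏ i ∈ S, (1 - x / X i ω)) := by
  simpa only [intervalIntegral.integral_of_le hs, Set.uIoc_of_le hs,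
    Function.uncurry_apply_pair] using
    (integrable_uncurry_prod_one_sub_div hmeas hs hae S).integral_prod_right

theorem integral_intervalIntegral_prod_one_sub_div [Fintype ι] (hX : iIndepFun X ℙ)
    (hmeas : ∀ i, Measurable (X i)) (hinv : ∀ i, Integrable (fun ω => (X i ω)⁻¹)) (hs : 0 ≤ s)
    (hae : ∀ᵐ ω ∂ℙ, ∀ i, s ≤ X i ω) (S : Finset ι) :
    ∫ ω, ∫ x in (0:ℝ)..s, ∏ i ∈ S, (1 - x / X i ω)
      = ∫ x in (0:ℝ)..s, ∏ i ∈ S, (1 - x * ∫ ω, (X i ω)⁻¹) := by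
  rw [← intervalIntegral_integral_swap (integrable_uncurry_prod_one_sub_div hmeas hs hae S)]
  simp_rw [integral_prod_one_sub_div hX hmeas hinv]

end Fubini

theorem integrable_inv_of_ae_le {Ω : Type*} [MeasurableSpace Ω] {P : Measure Ω}
    [IsFiniteMeasure P] {Y : Ω → ℝ} (hY : Measurable Y) {s : ℝ} (hs : 0 < s)
    (hle : ∀ᵐ ω ∂P, s ≤ Y ω) : Integrable (fun ω => (Y ω)⁻¹) P :=
  Integrable.mono' (integrable_const s⁻¹) hY.inv.aestronglyMeasurable <| hle.mono fun ω h => by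
    rw [Real.norm_eq_abs, abs_of_pos (inv_pos.2 (hs.trans_le h))]
    exact inv_anti₀ hs h

theorem mechanismK_expected_socialCost_eq_general
    {Ω : Type*} [MeasureSpace Ω] [IsProbabilityMeasure (ℙ : Measure Ω)]
    (n : ℕ) [NeZero n]
    (s : ℝ) (hs : 0 < s)
    (ν : Measure ℝ) (hν : ν (Set.Iio s) = 0)
    (X : Fin n → Ω → ℝ) (hX0 : ∀ ω, X 0 ω = s)
    (hmeas : ∀ i, Measurable (X i))
    (hindep : iIndepFun X ℙ)
    (hdist : ∀ i : Fin n, i ≠ 0 → Measure.map (X i) ℙ = ν)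
    (μ : ℝ) (hμ : μ = ∫ x, s / x ∂ν) (hμ0 : 0 < μ) :
    (∫ ω, SCK n (fun i => X i ω) ∂ℙ)
      = (s / μ) * (1 - (1 / (n : ℝ)) * ((1 - μ) * (1 - (1 - μ) ^ n) / μ)) := by
  have hνs : ∀ᵐ y ∂ν, s ≤ y := by
    rw [ae_iff]
    simp only [not_le]
    exact hν
  have hae : ∀ᵐ ω ∂ℙ, ∀ i, s ≤ X i ω := ae_all_iff.2 fun i => by
    by_cases hi : i = 0
    · exact ae_of_all _ fun ω => by rw [hi, hX0]
    · exact ae_of_ae_map (hmeas i).aemeasurable (by rw [hdist i hi]; exact hνs)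
  have hinv : ∀ i, Integrable (fun ω => (X i ω)⁻¹) :=
    fun i => integrable_inv_of_ae_le (hmeas i) hs (hae.mono fun ω h => h i)
  have hc₀ : ∫ ω, (X 0 ω)⁻¹ = s⁻¹ := by simp [hX0]
  have hc : ∀ i, i ≠ 0 → ∫ ω, (X i ω)⁻¹ = μ / s := fun i hi => by
    rw [← integral_map (hmeas i).aemeasurable measurable_inv.aestronglyMeasurable, hdist i hi,
      hμ]
    simp_rw [div_eq_mul_inv s, integral_const_mul]
    field_simp
  calc ∫ ω, SCK n (fun i => X i ω)
      = ∫ ω, ∑ k, ∫ x in (0:ℝ)..s, ∏ i ∈ univ.erase k, (1 - x / X i ω) :=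
        integral_congr_ae <| hae.mono fun ω hω => by
          dsimp only
          rw [SCK_eq_sum_intervalIntegral fun i => (hs.trans_le (hω i)).ne',
            ciInf_eq_of_apply_eq_of_le (t := (X · ω)) (hX0 ω) hω]
    _ = ∑ k, ∫ x in (0:ℝ)..s, ∏ i ∈ univ.erase k, (1 - x * ∫ ω, (X i ω)⁻¹) := by
        rw [integral_finsetSum _ fun k _ =>
          integrable_intervalIntegral_prod_one_sub_div hmeas hs.le hae _]
        simp_rw [integral_intervalIntegral_prod_one_sub_div hindep hmeas hinv hs.le hae]
    _ = ∫ x in (0:ℝ)..s, ∑ k, ∏ i ∈ univ.erase k, (1 - x * ∫ ω, (X i ω)⁻¹) :=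
        (intervalIntegral.integral_finsetSum fun k _ =>
          (by fun_prop : Continuous _).intervalIntegrable _ _).symm
    _ = _ := integral_sum_prod_erase_one_sub_mul hs.ne' hμ0.ne' hc₀ hc

/-- For `s > 0`, a probability distribution `ν` on `[s, ∞)`, and independent
`X_2, …, X_n ∼ ν` (with `n ≥ 2`), setting `μ = E_{X∼ν}[s/X] ∈ (0,1)`, the expected social cost
of mechanism K on the input `(s, X_2, …, X_n)` equals
`(s/μ) · (1 − (1/n) · (1 − μ)(1 − (1 − μ)^n)/μ)`. -/
theorem mechanismK_expected_socialCost_eq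
    {Ω : Type*} [MeasureSpace Ω] [IsProbabilityMeasure (ℙ : Measure Ω)]
    (n : ℕ) [NeZero n] (hn : 2 ≤ n)
    (s : ℝ) (hs : 0 < s)
    (ν : Measure ℝ) [IsProbabilityMeasure ν] (hν : ν (Set.Iio s) = 0)
    (X : Fin n → Ω → ℝ) (hX0 : ∀ ω, X 0 ω = s)
    (hmeas : ∀ i, Measurable (X i))
    (hindep : iIndepFun X ℙ)
    (hdist : ∀ i : Fin n, i ≠ 0 → Measure.map (X i) ℙ = ν)
    (μ : ℝ) (hμ : μ = ∫ x, s / x ∂ν) (hμ0 : 0 < μ) (hμ1 : μ < 1) :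
    (∫ ω, SCK n (fun i => X i ω) ∂ℙ)
      = (s / μ) * (1 - (1 / (n : ℝ)) * ((1 - μ) * (1 - (1 - μ) ^ n) / μ)) :=
  mechanismK_expected_socialCost_eq_general n s hs ν hν X hX0 hmeas hindep hdist μ hμ hμ0
end

section
/- Let t_min > 0 and λ > 0, and let D be the shifted exponential distribution on [t_min, ∞) with cumulative distribution function F(t) = 1 − e^{−λ(t − t_min)} for t ≥ t_min. Then (λ t_min / 2) · ln(1 + 2/(λ t_min)) < E_{t∼D}[ t_min / t ] < λ t_min · ln(1 + 1/(λ t_min)). -/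
/-!
Write `g t = t_min / t` and `f` for the density. Both bounds compare `∫ g f` with the integral of
`g` against a uniform density of the same mass: `λ · 1_(t_min, t_min + 1/λ]` for the upper bound
and `λ/2 · 1_(t_min, t_min + 2/λ]`, which also has the same mean as `f`, for the lower one; these
integrate `g` to the two logarithms. If both densities integrate `p` equally and
`(g - p) (f₁ - f₂) ≥ 0`, then `∫ g f₂ < ∫ g f₁` as soon as the product is positive on a set of
positive measure. For the upper bound `p` is the constant `g (t_min + 1/λ)`: `g` decreases and
`λ · 1 - f` changes sign once, at `t_min + 1/λ`. For the lower bound `p` is the secant of the convex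
`g` through `t₁ = t_min + log 2 / λ`, where `f = λ/2`, and `t₂ = t_min + 2/λ`: then `g - p` and
`f - λ/2 · 1` both change sign exactly at `t₁` and `t₂`.
-/

open MeasureTheory Real Set Filter Topology

theorem integral_withDensity_ofReal {α : Type*} [MeasurableSpace α] {μ : Measure α}
    {f : α → ℝ} (hf : Measurable f) (hf₀ : ∀ x, 0 ≤ f x) (g : α → ℝ) :
    ∫ x, g x ∂μ.withDensity (fun x => ENNReal.ofReal (f x)) = ∫ x, g x * f x ∂μ := by
  rw [integral_withDensity_eq_integral_toReal_smul hf.ennreal_ofReal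
    (ae_of_all _ fun _ => ENNReal.ofReal_lt_top)]
  simp only [ENNReal.toReal_ofReal (hf₀ _), smul_eq_mul, mul_comm]

theorem integral_mul_lt_integral_mul_of_sub_mul_sub_nonneg {α : Type*} [MeasurableSpace α]
    {μ : Measure α} {g p f₁ f₂ : α → ℝ}
    (hg₁ : Integrable (fun x => g x * f₁ x) μ) (hg₂ : Integrable (fun x => g x * f₂ x) μ)
    (hp₁ : Integrable (fun x => p x * f₁ x) μ) (hp₂ : Integrable (fun x => p x * f₂ x) μ)
    (hp : ∫ x, p x * f₁ x ∂μ = ∫ x, p x * f₂ x ∂μ)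
    (hsign : ∀ᵐ x ∂μ, 0 ≤ (g x - p x) * (f₁ x - f₂ x))
    {s : Set α} (hs : 0 < μ s) (hpos : ∀ x ∈ s, 0 < (g x - p x) * (f₁ x - f₂ x)) :
    ∫ x, g x * f₂ x ∂μ < ∫ x, g x * f₁ x ∂μ := by
  have hgf : Integrable (fun x => g x * f₁ x - g x * f₂ x) μ := hg₁.sub hg₂
  have hpf : Integrable (fun x => p x * f₁ x - p x * f₂ x) μ := hp₁.sub hp₂
  have hexpand : (fun x => (g x - p x) * (f₁ x - f₂ x)) =
      fun x => (g x * f₁ x - g x * f₂ x) - (p x * f₁ x - p x * f₂ x) := by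
    ext x; ring
  have hlt : 0 < ∫ x, (g x - p x) * (f₁ x - f₂ x) ∂μ :=
    (integral_pos_iff_support_of_nonneg_ae hsign (hexpand ▸ hgf.sub hpf)).2
      (hs.trans_le (measure_mono fun x hx => (hpos x hx).ne'))
  rw [hexpand, integral_sub hgf hpf, integral_sub hg₁ hg₂, integral_sub hp₁ hp₂, hp] at hlt
  linarith

theorem volume_restrict_Ioi_Ioi_pos (a b : ℝ) : 0 < volume.restrict (Ioi a) (Ioi b) := by
  simp [Measure.restrict_apply measurableSet_Ioi, Ioi_inter_Ioi]

section Uniform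

variable {a b : ℝ}

theorem mul_indicator_Iic_const (φ : ℝ → ℝ) (c : ℝ) :
    (fun t => φ t * (Iic b).indicator (fun _ => c) t) = (Iic b).indicator fun t => c * φ t := by
  ext t
  by_cases ht : t ∈ Iic b <;> simp [ht, mul_comm]

theorem integrableOn_mul_indicator_Iic {φ : ℝ → ℝ} (hφ : IntegrableOn φ (Ioc a b)) (c : ℝ) :
    IntegrableOn (fun t => φ t * (Iic b).indicator (fun _ => c) t) (Ioi a) := by
  rw [mul_indicator_Iic_const, integrableOn_indicator_iff measurableSet_Iic, inter_comm]
  exact hφ.const_mul c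

theorem setIntegral_mul_indicator_Iic (φ : ℝ → ℝ) (c : ℝ) :
    ∫ t in Ioi a, φ t * (Iic b).indicator (fun _ => c) t = c * ∫ t in Ioc a b, φ t := by
  rw [mul_indicator_Iic_const, setIntegral_indicator measurableSet_Iic, Ioi_inter_Iic,
    integral_const_mul]

theorem integral_affine (α β : ℝ) :
    ∫ t in a..b, (α + β * t) = (b - a) * (α + β * ((a + b) / 2)) := by
  rw [intervalIntegral.integral_add intervalIntegrable_const
    (intervalIntegral.intervalIntegrable_id.const_mul β), intervalIntegral.integral_const,
    intervalIntegral.integral_const_mul, integral_id, smul_eq_mul]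
  ring

theorem integrableOn_Ioc_const_div (c : ℝ) (ha : 0 < a) :
    IntegrableOn (fun t => c / t) (Ioc a b) :=
  (ContinuousOn.integrableOn_Icc (continuousOn_const.div continuousOn_id
    fun _ ht => (ha.trans_le ht.1).ne')).mono_set Ioc_subset_Icc_self

theorem setIntegral_Ioc_const_div (c : ℝ) (ha : 0 < a) (hab : a ≤ b) :
    ∫ t in Ioc a b, c / t = c * log (b / a) := by
  simp_rw [div_eq_mul_inv c]
  rw [← intervalIntegral.integral_of_le hab, intervalIntegral.integral_const_mul,
    integral_inv_of_pos ha (ha.trans_le hab)]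

theorem setIntegral_div_mul_indicator_Iic (c : ℝ) (ha : 0 < a) (hab : a ≤ b) :
    ∫ t in Ioi a, a / t * (Iic b).indicator (fun _ => c) t = c * a * log (b / a) := by
  rw [setIntegral_mul_indicator_Iic, setIntegral_Ioc_const_div a ha hab, mul_assoc]

end Uniform

theorem add_div_div_eq_one_add_div {a l : ℝ} (ha : a ≠ 0) (hl : l ≠ 0) (k : ℝ) :
    (a + k / l) / a = 1 + k / (l * a) := by
  field_simp

theorem div_sub_secant_eq {a t t₁ t₂ : ℝ} (ht : t ≠ 0) (ht₁ : t₁ ≠ 0) (ht₂ : t₂ ≠ 0) :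
    a / t - (a * (t₁ + t₂) / (t₁ * t₂) + -a / (t₁ * t₂) * t) =
      a / (t * (t₁ * t₂)) * ((t - t₁) * (t - t₂)) := by
  field_simp
  ring

section ShiftedExponential

variable {a l : ℝ}

noncomputable def shiftedExpPDF (a l t : ℝ) : ℝ := l * exp (-l * (t - a))

theorem shiftedExpPDF_pos (hl : 0 < l) (t : ℝ) : 0 < shiftedExpPDF a l t :=
  mul_pos hl (exp_pos _)

theorem continuous_shiftedExpPDF : Continuous (shiftedExpPDF a l) := by
  unfold shiftedExpPDF; fun_prop

theorem antitone_shiftedExpPDF (hl : 0 ≤ l) : Antitone (shiftedExpPDF a l) := fun s t hst => by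
  unfold shiftedExpPDF
  exact mul_le_mul_of_nonneg_left (exp_le_exp.2 (by nlinarith)) hl

theorem shiftedExpPDF_self : shiftedExpPDF a l a = l := by
  simp [shiftedExpPDF]

theorem shiftedExpPDF_add_log_two_div (hl : l ≠ 0) : shiftedExpPDF a l (a + log 2 / l) = l / 2 := by
  have : -l * (a + log 2 / l - a) = -log 2 := by field_simp; ring
  rw [shiftedExpPDF, this, exp_neg, exp_log two_pos]
  ring

theorem hasDerivAt_neg_mul_sub (t : ℝ) : HasDerivAt (fun s => -l * (s - a)) (-l) t := by
  simpa using ((hasDerivAt_id t).sub_const a).const_mul (-l)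

theorem hasDerivAt_neg_exp_neg_mul_sub (t : ℝ) :
    HasDerivAt (fun s => -exp (-l * (s - a))) (shiftedExpPDF a l t) t :=
  (hasDerivAt_neg_mul_sub t).exp.neg.congr_deriv (by rw [shiftedExpPDF]; ring)

theorem hasDerivAt_neg_sub_add_mul_exp_neg_mul_sub (hl : l ≠ 0) (t : ℝ) :
    HasDerivAt (fun s => -((s - a + 1 / l) * exp (-l * (s - a))))
      ((t - a) * shiftedExpPDF a l t) t := by
  have hlin : HasDerivAt (fun s => s - a + 1 / l) 1 t := ((hasDerivAt_id t).sub_const a).add_const _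
  refine (hlin.mul (hasDerivAt_neg_mul_sub t).exp).neg.congr_deriv ?_
  rw [shiftedExpPDF]; field_simp; ring

theorem tendsto_mul_sub_atTop (hl : 0 < l) : Tendsto (fun s => l * (s - a)) atTop atTop :=
  (tendsto_atTop_add_const_right atTop (-a) tendsto_id).const_mul_atTop hl

theorem tendsto_exp_neg_mul_sub_atTop (hl : 0 < l) :
    Tendsto (fun s => exp (-l * (s - a))) atTop (𝓝 0) := by
  refine (tendsto_exp_neg_atTop_nhds_zero.comp (tendsto_mul_sub_atTop (a := a) hl)).congr
    fun s => ?_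
  simp only [Function.comp_apply, neg_mul]

theorem tendsto_sub_add_mul_exp_neg_mul_sub_atTop (hl : 0 < l) :
    Tendsto (fun s => (s - a + 1 / l) * exp (-l * (s - a))) atTop (𝓝 0) := by
  have h := (((tendsto_pow_mul_exp_neg_atTop_nhds_zero 1).add
    tendsto_exp_neg_atTop_nhds_zero).const_mul (1 / l)).comp (tendsto_mul_sub_atTop (a := a) hl)
  simp only [Function.comp_def, add_zero, mul_zero, pow_one] at h
  refine h.congr fun s => ?_
  field_simp

theorem integrableOn_shiftedExpPDF (hl : 0 < l) : IntegrableOn (shiftedExpPDF a l) (Ioi a) :=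
  integrableOn_Ioi_deriv_of_nonneg' (fun t _ => hasDerivAt_neg_exp_neg_mul_sub t)
    (fun t _ => (shiftedExpPDF_pos hl t).le) (tendsto_exp_neg_mul_sub_atTop hl).neg

theorem integral_shiftedExpPDF (hl : 0 < l) : ∫ t in Ioi a, shiftedExpPDF a l t = 1 := by
  rw [integral_Ioi_of_hasDerivAt_of_nonneg' (fun t _ => hasDerivAt_neg_exp_neg_mul_sub t)
    (fun t _ => (shiftedExpPDF_pos hl t).le) (tendsto_exp_neg_mul_sub_atTop hl).neg]
  simp

theorem sub_mul_shiftedExpPDF_nonneg (hl : 0 < l) {t : ℝ} (ht : t ∈ Ioi a) :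
    0 ≤ (t - a) * shiftedExpPDF a l t :=
  mul_nonneg (sub_nonneg.2 (le_of_lt ht)) (shiftedExpPDF_pos hl t).le

theorem integrableOn_sub_mul_shiftedExpPDF (hl : 0 < l) :
    IntegrableOn (fun t => (t - a) * shiftedExpPDF a l t) (Ioi a) :=
  integrableOn_Ioi_deriv_of_nonneg'
    (fun t _ => hasDerivAt_neg_sub_add_mul_exp_neg_mul_sub hl.ne' t)
    (fun _ ht => sub_mul_shiftedExpPDF_nonneg hl ht)
    (tendsto_sub_add_mul_exp_neg_mul_sub_atTop hl).neg

theorem integral_sub_mul_shiftedExpPDF (hl : 0 < l) :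
    ∫ t in Ioi a, (t - a) * shiftedExpPDF a l t = 1 / l := by
  rw [integral_Ioi_of_hasDerivAt_of_nonneg'
    (fun t _ => hasDerivAt_neg_sub_add_mul_exp_neg_mul_sub hl.ne' t)
    (fun _ ht => sub_mul_shiftedExpPDF_nonneg hl ht)
    (tendsto_sub_add_mul_exp_neg_mul_sub_atTop hl).neg]
  simp

theorem affine_mul_shiftedExpPDF (α β t : ℝ) :
    (α + β * t) * shiftedExpPDF a l t =
      (α + β * a) * shiftedExpPDF a l t + β * ((t - a) * shiftedExpPDF a l t) := by
  ring

theorem integrableOn_affine_mul_shiftedExpPDF (hl : 0 < l) (α β : ℝ) :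
    IntegrableOn (fun t => (α + β * t) * shiftedExpPDF a l t) (Ioi a) := by
  simp_rw [affine_mul_shiftedExpPDF α β]
  exact ((integrableOn_shiftedExpPDF hl).const_mul _).add
    ((integrableOn_sub_mul_shiftedExpPDF hl).const_mul _)

theorem integral_affine_mul_shiftedExpPDF (hl : 0 < l) (α β : ℝ) :
    ∫ t in Ioi a, (α + β * t) * shiftedExpPDF a l t = α + β * (a + 1 / l) := by
  simp_rw [affine_mul_shiftedExpPDF α β]
  rw [integral_add ((integrableOn_shiftedExpPDF hl).const_mul _)
    ((integrableOn_sub_mul_shiftedExpPDF hl).const_mul _), integral_const_mul,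
    integral_const_mul, integral_shiftedExpPDF hl, integral_sub_mul_shiftedExpPDF hl]
  ring

theorem integrableOn_div_mul_shiftedExpPDF (ha : 0 < a) (hl : 0 < l) :
    IntegrableOn (fun t => a / t * shiftedExpPDF a l t) (Ioi a) := by
  refine (integrableOn_shiftedExpPDF hl).mono'
    ((measurable_const.div measurable_id).mul
      continuous_shiftedExpPDF.measurable).aestronglyMeasurable
    (ae_restrict_of_forall_mem measurableSet_Ioi fun t (ht : a < t) => ?_)
  have hratio : a / t ≤ 1 := (div_le_one (ha.trans ht)).2 ht.le
  rw [norm_mul, Real.norm_of_nonneg (div_nonneg ha.le (ha.trans ht).le),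
    Real.norm_of_nonneg (shiftedExpPDF_pos hl t).le]
  exact mul_le_of_le_one_left (shiftedExpPDF_pos hl t).le hratio

theorem setIntegral_const_mul_indicator_Iic_eq (hl : 0 < l) (c : ℝ) :
    ∫ t in Ioi a, c * (Iic (a + 1 / l)).indicator (fun _ => l) t =
      ∫ t in Ioi a, c * shiftedExpPDF a l t := by
  rw [setIntegral_mul_indicator_Iic, integral_const_mul, integral_shiftedExpPDF hl,
    setIntegral_const, Real.volume_real_Ioc_of_le (le_add_of_nonneg_right (by positivity)),
    smul_eq_mul, add_sub_cancel_left]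
  field_simp

theorem setIntegral_affine_mul_indicator_Iic_eq (hl : 0 < l) (α β : ℝ) :
    ∫ t in Ioi a, (α + β * t) * (Iic (a + 2 / l)).indicator (fun _ => l / 2) t =
      ∫ t in Ioi a, (α + β * t) * shiftedExpPDF a l t := by
  rw [integral_affine_mul_shiftedExpPDF hl, setIntegral_mul_indicator_Iic,
    ← intervalIntegral.integral_of_le (le_add_of_nonneg_right (by positivity)), integral_affine,
    add_sub_cancel_left]
  field_simp
  ring

theorem setIntegral_div_mul_shiftedExpPDF_lt (ha : 0 < a) (hl : 0 < l) :
    ∫ t in Ioi a, a / t * shiftedExpPDF a l t < l * a * log (1 + 1 / (l * a)) := by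
  set b := a + 1 / l with hb
  have hab : a < b := lt_add_of_pos_right a (one_div_pos.2 hl)
  have hpos : ∀ t ∈ Ioi b,
      0 < (a / t - a / b) * ((Iic b).indicator (fun _ => l) t - shiftedExpPDF a l t) := by
    intro t (hbt : b < t)
    rw [indicator_of_notMem (show t ∉ Iic b from not_le.2 hbt), zero_sub]
    exact mul_pos_of_neg_of_neg
      (sub_neg.2 (div_lt_div_of_pos_left ha (ha.trans hab) hbt))
      (neg_neg_of_pos (shiftedExpPDF_pos hl t))
  have hsign : ∀ t ∈ Ioi a,
      0 ≤ (a / t - a / b) * ((Iic b).indicator (fun _ => l) t - shiftedExpPDF a l t) := by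
    intro t (hat : a < t)
    rcases le_or_gt t b with htb | hbt
    · have hdens : shiftedExpPDF a l t ≤ l :=
        (antitone_shiftedExpPDF hl.le hat.le).trans_eq shiftedExpPDF_self
      rw [indicator_of_mem (show t ∈ Iic b from htb)]
      exact mul_nonneg (sub_nonneg.2 (div_le_div_of_nonneg_left ha.le (ha.trans hat) htb))
        (sub_nonneg.2 hdens)
    · exact (hpos t hbt).le
  calc ∫ t in Ioi a, a / t * shiftedExpPDF a l t
      < ∫ t in Ioi a, a / t * (Iic b).indicator (fun _ => l) t :=
        integral_mul_lt_integral_mul_of_sub_mul_sub_nonneg (p := fun _ => a / b)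
          (integrableOn_mul_indicator_Iic (integrableOn_Ioc_const_div a ha) l)
          (integrableOn_div_mul_shiftedExpPDF ha hl)
          (integrableOn_mul_indicator_Iic (integrableOn_const (by simp)) l)
          ((integrableOn_shiftedExpPDF hl).const_mul _)
          (setIntegral_const_mul_indicator_Iic_eq hl _)
          (ae_restrict_of_forall_mem measurableSet_Ioi hsign)
          (volume_restrict_Ioi_Ioi_pos a b) hpos
    _ = l * a * log (1 + 1 / (l * a)) := by
      rw [setIntegral_div_mul_indicator_Iic l ha hab.le, hb,
        add_div_div_eq_one_add_div ha.ne' hl.ne']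

theorem lt_setIntegral_div_mul_shiftedExpPDF (ha : 0 < a) (hl : 0 < l) :
    l * a / 2 * log (1 + 2 / (l * a)) < ∫ t in Ioi a, a / t * shiftedExpPDF a l t := by
  set t₁ := a + log 2 / l
  set t₂ := a + 2 / l with ht₂
  have ht₁ : 0 < t₁ := ha.trans (lt_add_of_pos_right a (div_pos (log_pos one_lt_two) hl))
  have ht₁₂ : t₁ < t₂ := (add_lt_add_iff_left a).2 <|
    div_lt_div_of_pos_right (by linarith [log_le_sub_one_of_pos two_pos]) hl
  have hat₂ : a < t₂ := lt_add_of_pos_right a (div_pos two_pos hl)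
  set p : ℝ → ℝ := fun t => a * (t₁ + t₂) / (t₁ * t₂) + -a / (t₁ * t₂) * t
  have hscale : ∀ t, 0 < t → 0 < a / (t * (t₁ * t₂)) := fun t ht =>
    div_pos ha (mul_pos ht (mul_pos ht₁ (ht₁.trans ht₁₂)))
  have hpos : ∀ t ∈ Ioi t₂,
      0 < (a / t - p t) * (shiftedExpPDF a l t - (Iic t₂).indicator (fun _ => l / 2) t) := by
    intro t (ht₂t : t₂ < t)
    have ht : 0 < t := ht₁.trans (ht₁₂.trans ht₂t)
    rw [indicator_of_notMem (show t ∉ Iic t₂ from not_le.2 ht₂t), sub_zero,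
      div_sub_secant_eq ht.ne' ht₁.ne' (ht₁.trans ht₁₂).ne']
    exact mul_pos (mul_pos (hscale t ht)
      (mul_pos (sub_pos.2 (ht₁₂.trans ht₂t)) (sub_pos.2 ht₂t))) (shiftedExpPDF_pos hl t)
  have hsign : ∀ t ∈ Ioi a,
      0 ≤ (a / t - p t) * (shiftedExpPDF a l t - (Iic t₂).indicator (fun _ => l / 2) t) := by
    intro t (hat : a < t)
    rcases le_or_gt t t₂ with htt₂ | ht₂t
    · have hdens : shiftedExpPDF a l t₁ = l / 2 := shiftedExpPDF_add_log_two_div hl.ne'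
      have hanti : (shiftedExpPDF a l t - shiftedExpPDF a l t₁) * (t - t₁) ≤ 0 :=
        ((antitone_shiftedExpPDF hl.le).antivary monotone_id).sub_mul_sub_nonpos t₁ t
      rw [indicator_of_mem (show t ∈ Iic t₂ from htt₂),
        div_sub_secant_eq (ha.trans hat).ne' ht₁.ne' (ht₁.trans ht₁₂).ne', ← hdens]
      calc (0 : ℝ) ≤ a / (t * (t₁ * t₂)) *
            ((t₂ - t) * -((shiftedExpPDF a l t - shiftedExpPDF a l t₁) * (t - t₁))) :=
            mul_nonneg (hscale t (ha.trans hat)).le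
              (mul_nonneg (sub_nonneg.2 htt₂) (neg_nonneg.2 hanti))
        _ = _ := by ring
    · exact (hpos t ht₂t).le
  calc l * a / 2 * log (1 + 2 / (l * a))
      = ∫ t in Ioi a, a / t * (Iic t₂).indicator (fun _ => l / 2) t := by
        rw [setIntegral_div_mul_indicator_Iic _ ha hat₂.le, ht₂,
          add_div_div_eq_one_add_div ha.ne' hl.ne']
        ring
    _ < ∫ t in Ioi a, a / t * shiftedExpPDF a l t :=
        integral_mul_lt_integral_mul_of_sub_mul_sub_nonneg (p := p)
          (integrableOn_div_mul_shiftedExpPDF ha hl)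
          (integrableOn_mul_indicator_Iic (integrableOn_Ioc_const_div a ha) _)
          (integrableOn_affine_mul_shiftedExpPDF hl _ _)
          (integrableOn_mul_indicator_Iic
            ((Continuous.integrableOn_Icc (by fun_prop)).mono_set Ioc_subset_Icc_self) _)
          (setIntegral_affine_mul_indicator_Iic_eq hl _ _).symm
          (ae_restrict_of_forall_mem measurableSet_Ioi hsign)
          (volume_restrict_Ioi_Ioi_pos a t₂) hpos

end ShiftedExponential

/-- For the shifted exponential distribution `D` on `[tmin, ∞)` with density
`λ e^{−λ(t − tmin)}` (equivalently, CDF `F(t) = 1 − e^{−λ(t − tmin)}` for `t ≥ tmin`), where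
`tmin > 0` and `λ > 0`, we have
`(λ tmin / 2) · ln(1 + 2/(λ tmin)) < E_{t∼D}[tmin/t] < λ tmin · ln(1 + 1/(λ tmin))`. -/
theorem shifted_exponential_expected_ratio_bounds
    (tmin l : ℝ) (htmin : 0 < tmin) (hl : 0 < l)
    (D : Measure ℝ)
    (hD : D = (volume.restrict (Set.Ici tmin)).withDensity
        (fun t => ENNReal.ofReal (l * Real.exp (-l * (t - tmin))))) :
    (l * tmin / 2) * Real.log (1 + 2 / (l * tmin)) < (∫ t, tmin / t ∂D)
      ∧ (∫ t, tmin / t ∂D) < l * tmin * Real.log (1 + 1 / (l * tmin)) := by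
  have hexpectation : ∫ t, tmin / t ∂D = ∫ t in Ioi tmin, tmin / t * shiftedExpPDF tmin l t := by
    subst hD
    rw [← integral_Ici_eq_integral_Ioi]
    exact integral_withDensity_ofReal continuous_shiftedExpPDF.measurable
      (fun t => (shiftedExpPDF_pos hl t).le) _
  rw [hexpectation]
  exact ⟨lt_setIntegral_div_mul_shiftedExpPDF htmin hl,
    setIntegral_div_mul_shiftedExpPDF_lt htmin hl⟩
end

section
/- For every x > 0, the exponential integral E_1(x) = ∫_x^∞ (e^{−r}/r) dr satisfies (1/2) e^{−x} ln(1 + 2/x) < E_1(x) < e^{−x} ln(1 + 1/x). -/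
open MeasureTheory Real Filter Topology

/-! Both bounds compare `e^{-r}/r` pointwise with `-F_c'`, where `F_c(r) = e^{-r} log(1 + c/r)`
vanishes at infinity, so that `∫_x^∞ -F_c' = F_c(x)`. For `c = 1` the comparison is
`1/(r+1) < log(1 + 1/r)`, and for `c = 2` it is `log y < sinh (log y) = (y - y⁻¹)/2`
at `y = 1 + 2/r`. -/

theorem setIntegral_lt_setIntegral_of_forall_lt {X : Type*} [MeasurableSpace X] {μ : Measure X}
    {s : Set X} {f g : X → ℝ} (hs : MeasurableSet s) (hμs : μ s ≠ 0)
    (hf : IntegrableOn f s μ) (hg : IntegrableOn g s μ) (hlt : ∀ x ∈ s, f x < g x) :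
    ∫ x in s, f x ∂μ < ∫ x in s, g x ∂μ := by
  rw [← sub_pos, ← integral_sub hg hf]
  have hsupp : s ⊆ Function.support fun x => g x - f x := fun x hx => (sub_pos.2 (hlt x hx)).ne'
  rw [setIntegral_pos_iff_support_of_nonneg_ae
    (ae_restrict_of_forall_mem hs fun x hx => (sub_pos.2 (hlt x hx)).le) (hg.sub hf),
    Set.inter_eq_right.2 hsupp]
  exact pos_iff_ne_zero.2 hμs

theorem inv_add_one_lt_log_one_add_inv {r : ℝ} (hr : 0 < r) :
    1 / (r + 1) < log (1 + 1 / r) := by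
  refine lt_of_le_of_lt ?_ (lt_log_one_add_of_pos (one_div_pos.2 hr))
  rw [div_le_div_iff₀ (by positivity) (by positivity)]
  field_simp
  linarith

theorem log_one_add_two_div_lt {r : ℝ} (hr : 0 < r) :
    log (1 + 2 / r) < 1 / r + 1 / (r + 2) := by
  have hy : 1 < 1 + 2 / r := lt_add_of_pos_right 1 (by positivity)
  have h := self_lt_sinh_iff.2 (log_pos hy)
  rw [sinh_log (by linarith)] at h
  convert h using 1
  field_simp
  ring

theorem hasDerivAt_exp_neg_mul_log_one_add_div {c r : ℝ} (hr : r ≠ 0) (hrc : r + c ≠ 0) :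
    HasDerivAt (fun r => exp (-r) * log (1 + c / r))
      (-(exp (-r) * (log (1 + c / r) + c / (r * (r + c))))) r := by
  have h1 : 1 + c / r ≠ 0 := by
    rw [show 1 + c / r = (r + c) / r by field_simp]
    exact div_ne_zero hrc hr
  have hlog : HasDerivAt (fun r => log (1 + c / r)) (-(c / (r * (r + c)))) r := by
    refine ((((hasDerivAt_inv hr).const_mul c).const_add 1).log h1).congr_deriv ?_
    field_simp
  refine ((hasDerivAt_neg r).exp.mul hlog).congr_deriv ?_
  ring

theorem tendsto_exp_neg_mul_log_one_add_div (c : ℝ) :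
    Tendsto (fun r => exp (-r) * log (1 + c / r)) atTop (𝓝 0) := by
  have hlog : Tendsto (fun r => log (1 + c / r)) atTop (𝓝 0) := by
    have h := ((tendsto_const_nhds (x := c)).div_atTop tendsto_id).const_add 1
    rw [add_zero] at h
    simpa [Function.comp_def] using (continuousAt_log one_ne_zero).tendsto.comp h
  simpa using tendsto_exp_neg_atTop_nhds_zero.mul hlog

theorem exp_neg_mul_log_one_add_div_add_nonneg {c r : ℝ} (hc : 0 ≤ c) (hr : 0 < r) :
    0 ≤ exp (-r) * (log (1 + c / r) + c / (r * (r + c))) := by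
  have hlog : 0 ≤ log (1 + c / r) := log_nonneg (le_add_of_nonneg_right (by positivity))
  positivity

theorem integrableOn_Ioi_exp_neg_mul_log_one_add_div_add {c x : ℝ} (hc : 0 ≤ c) (hx : 0 < x) :
    IntegrableOn (fun r => exp (-r) * (log (1 + c / r) + c / (r * (r + c)))) (Set.Ioi x) := by
  simpa using (integrableOn_Ioi_deriv_of_nonpos'
    (fun r hr => hasDerivAt_exp_neg_mul_log_one_add_div (hx.trans_le hr).ne'
      (by linarith [hx.trans_le hr]))
    (fun r hr => neg_nonpos.2 (exp_neg_mul_log_one_add_div_add_nonneg hc (hx.trans hr)))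
    (tendsto_exp_neg_mul_log_one_add_div c)).neg

theorem integral_Ioi_exp_neg_mul_log_one_add_div_add {c x : ℝ} (hc : 0 ≤ c) (hx : 0 < x) :
    ∫ r in Set.Ioi x, exp (-r) * (log (1 + c / r) + c / (r * (r + c)))
      = exp (-x) * log (1 + c / x) := by
  have h := integral_Ioi_of_hasDerivAt_of_nonpos'
    (fun r hr => hasDerivAt_exp_neg_mul_log_one_add_div (hx.trans_le hr).ne'
      (by linarith [hx.trans_le hr]))
    (fun r hr => neg_nonpos.2 (exp_neg_mul_log_one_add_div_add_nonneg hc (hx.trans hr)))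
    (tendsto_exp_neg_mul_log_one_add_div c)
  rw [integral_neg, zero_sub, neg_inj] at h
  exact h

theorem exp_neg_div_lt_exp_neg_mul_log_one_add_inv_add {r : ℝ} (hr : 0 < r) :
    exp (-r) / r < exp (-r) * (log (1 + 1 / r) + 1 / (r * (r + 1))) := by
  have h := inv_add_one_lt_log_one_add_inv hr
  calc exp (-r) / r = exp (-r) * (1 / (r + 1) + 1 / (r * (r + 1))) := by field_simp
    _ < exp (-r) * (log (1 + 1 / r) + 1 / (r * (r + 1))) := by gcongr

theorem half_exp_neg_mul_log_one_add_two_div_add_lt_exp_neg_div {r : ℝ} (hr : 0 < r) :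
    1 / 2 * (exp (-r) * (log (1 + 2 / r) + 2 / (r * (r + 2)))) < exp (-r) / r := by
  have h := log_one_add_two_div_lt hr
  calc 1 / 2 * (exp (-r) * (log (1 + 2 / r) + 2 / (r * (r + 2))))
      < 1 / 2 * (exp (-r) * (1 / r + 1 / (r + 2) + 2 / (r * (r + 2)))) := by gcongr
    _ = exp (-r) / r := by field_simp; ring

/-- For every `x > 0`, the exponential integral `E_1(x) = ∫_x^∞ e^{−r}/r dr`
satisfies `(1/2) e^{−x} ln(1 + 2/x) < E_1(x) < e^{−x} ln(1 + 1/x)`. -/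
theorem exponential_integral_bounds (x : ℝ) (hx : 0 < x) :
    (1 / 2) * Real.exp (-x) * Real.log (1 + 2 / x)
        < (∫ r in Set.Ioi x, Real.exp (-r) / r)
      ∧ (∫ r in Set.Ioi x, Real.exp (-r) / r) < Real.exp (-x) * Real.log (1 + 1 / x) := by
  have hG₁ := integrableOn_Ioi_exp_neg_mul_log_one_add_div_add zero_le_one hx
  have hG₂ := integrableOn_Ioi_exp_neg_mul_log_one_add_div_add zero_le_two hx
  have hE : IntegrableOn (fun r => exp (-r) / r) (Set.Ioi x) := by
    refine hG₁.mono' (Measurable.aestronglyMeasurable (by fun_prop))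
      (ae_restrict_of_forall_mem measurableSet_Ioi fun r hr => ?_)
    have hr : 0 < r := hx.trans hr
    rw [Real.norm_of_nonneg (by positivity)]
    exact (exp_neg_div_lt_exp_neg_mul_log_one_add_inv_add hr).le
  constructor
  · calc 1 / 2 * exp (-x) * log (1 + 2 / x)
        = ∫ r in Set.Ioi x, 1 / 2 * (exp (-r) * (log (1 + 2 / r) + 2 / (r * (r + 2)))) := by
          rw [integral_const_mul, integral_Ioi_exp_neg_mul_log_one_add_div_add zero_le_two hx,
            mul_assoc]
      _ < ∫ r in Set.Ioi x, exp (-r) / r :=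
          setIntegral_lt_setIntegral_of_forall_lt measurableSet_Ioi (by simp) (hG₂.const_mul _) hE
            fun r hr => half_exp_neg_mul_log_one_add_two_div_add_lt_exp_neg_div (hx.trans hr)
  · calc ∫ r in Set.Ioi x, exp (-r) / r
        < ∫ r in Set.Ioi x, exp (-r) * (log (1 + 1 / r) + 1 / (r * (r + 1))) :=
          setIntegral_lt_setIntegral_of_forall_lt measurableSet_Ioi (by simp) hE hG₁
            fun r hr => exp_neg_div_lt_exp_neg_mul_log_one_add_inv_add (hx.trans hr)
      _ = exp (-x) * log (1 + 1 / x) := integral_Ioi_exp_neg_mul_log_one_add_div_add zero_le_one hx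
end

section
/- As n → ∞, the average-case approximation ratio of mechanism P has limit superior at most ( ∑_{j=1}^m (E_{t∼D^j}[1/t])^{-1} ) / ( ∑_{j=1}^m t^j_min ): limsup_{n→∞} r_n(P) ≤ (∑_j (E_{t∼D^j}[1/t])^{-1}) / (∑_j t^j_min). -/
/-!
Write `E_j = E[1/t]` for `t ∼ D^j`. The social cost `SC_P(t^j)` is `n` over the sum of the
`1/t_i^j`, so on the event that each of these sums is at least `n (E_j - ε)` the ratio is at most
`(∑_j (E_j - ε)⁻¹) / ∑_j tmin_j`, the optimum being at least `∑_j tmin_j`. Off that event the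
ratio is still at most `n`, because `SC_P(t^j) ≤ n min_i t_i^j`. Since `1/t_i^j ∈ [0, 1/tmin_j]`,
Hoeffding's inequality makes the bad event exponentially unlikely, so `r_n` is at most the first
bound plus `n e^{-cn} → 0`; finally let `ε → 0`.
-/

open MeasureTheory ProbabilityTheory Finset Filter

/-- Social cost of mechanism P on a cost vector `t`:
`SC_P(t) = ∑_k p_k^P t_k = n / (∑_k 1/t_k)` where `p_k^P = (1/t_k) / (∑_i 1/t_i)`. -/
noncomputable def SCP (n : ℕ) (t : Fin n → ℝ) : ℝ :=
  (n : ℝ) / (∑ k, 1 / t k)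

open Real Topology

section SocialCost

variable {m n : ℕ}

lemma SCP_le_mul_iInf {t : Fin n → ℝ} (ht : ∀ i, 0 < t i) : SCP n t ≤ n * ⨅ i, t i := by
  obtain rfl | hn := n.eq_zero_or_pos
  · simp [SCP]
  have : Nonempty (Fin n) := ⟨⟨0, hn⟩⟩
  obtain ⟨k, hk⟩ := exists_eq_ciInf_of_finite (f := t)
  have hk_pos := ht k
  calc SCP n t ≤ n / (1 / t k) :=
        div_le_div_of_nonneg_left n.cast_nonneg (by positivity)
          (single_le_sum (fun i _ ↦ (one_div_pos.2 (ht i)).le) (mem_univ k))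
    _ = n * ⨅ i, t i := by rw [one_div, div_inv_eq_mul, hk]

lemma SCP_le_inv_of_mul_le_sum {t : Fin n → ℝ} {a : ℝ} (ha : 0 < a)
    (h : n * a ≤ ∑ i, 1 / t i) : SCP n t ≤ a⁻¹ := by
  obtain rfl | hn := n.eq_zero_or_pos
  · simpa [SCP] using ha.le
  calc SCP n t ≤ n / (n * a) := div_le_div_of_nonneg_left n.cast_nonneg (by positivity) h
    _ = a⁻¹ := by field_simp

/-- The ratio inside `r_n(P)`; note the task-first indexing `t j i = t_i^j`. -/
noncomputable def approxRatioP (t : Fin m → Fin n → ℝ) : ℝ :=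
  (∑ j, SCP n (t j)) / ∑ j, ⨅ i, t j i

lemma approxRatioP_nonneg {t : Fin m → Fin n → ℝ} (ht : ∀ j i, 0 ≤ t j i) :
    0 ≤ approxRatioP t :=
  div_nonneg
    (sum_nonneg fun j _ ↦ div_nonneg n.cast_nonneg
      (sum_nonneg fun i _ ↦ one_div_nonneg.2 (ht j i)))
    (sum_nonneg fun j _ ↦ Real.iInf_nonneg (ht j))

lemma approxRatioP_le_natCast {t : Fin m → Fin n → ℝ} (ht : ∀ j i, 0 < t j i) :
    approxRatioP t ≤ n :=
  div_le_of_le_mul₀ (sum_nonneg fun j _ ↦ Real.iInf_nonneg fun i ↦ (ht j i).le) n.cast_nonneg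
    (by rw [mul_sum]; exact sum_le_sum fun j _ ↦ SCP_le_mul_iInf (ht j))

lemma approxRatioP_le_of_mul_le_sum {t : Fin m → Fin n → ℝ} {tmin a : Fin m → ℝ}
    (htmin : 0 < ∑ j, tmin j) (hle : ∀ j i, tmin j ≤ t j i) (ha : ∀ j, 0 < a j)
    (hsum : ∀ j, n * a j ≤ ∑ i, 1 / t j i) :
    approxRatioP t ≤ (∑ j, (a j)⁻¹) / ∑ j, tmin j := by
  have hK : 0 ≤ ∑ j, (a j)⁻¹ := sum_nonneg fun j _ ↦ (inv_pos.2 (ha j)).le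
  obtain rfl | hn := n.eq_zero_or_pos
  · simpa [approxRatioP, SCP] using div_nonneg hK htmin.le
  have : Nonempty (Fin n) := ⟨⟨0, hn⟩⟩
  exact div_le_div₀ hK (sum_le_sum fun j _ ↦ SCP_le_inv_of_mul_le_sum (ha j) (hsum j)) htmin
    (sum_le_sum fun j _ ↦ le_ciInf (hle j))

end SocialCost

lemma limsup_le_of_le_add_of_tendsto_zero {ι : Type*} {f : Filter ι} [f.NeBot] {u v : ι → ℝ}
    {K : ℝ} (h0 : ∀ i, 0 ≤ u i) (hle : ∀ i, u i ≤ K + v i) (hv : Tendsto v f (𝓝 0)) :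
    limsup u f ≤ K := by
  have hKv : Tendsto (fun i ↦ K + v i) f (𝓝 K) := by simpa using hv.const_add K
  refine (limsup_le_limsup (Eventually.of_forall hle) ?_ hKv.isBoundedUnder_le).trans_eq
    hKv.limsup_eq
  exact isCoboundedUnder_le_of_le f h0

lemma tendsto_natCast_mul_exp_neg_mul_atTop {c : ℝ} (hc : 0 < c) :
    Tendsto (fun n : ℕ ↦ n * exp (-(c * n))) atTop (𝓝 0) := by
  have h := ((tendsto_pow_mul_exp_neg_atTop_nhds_zero 1).comp
    (tendsto_natCast_atTop_atTop.const_mul_atTop hc)).const_mul c⁻¹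
  rw [mul_zero] at h
  refine h.congr fun n ↦ ?_
  simp only [Function.comp_apply, pow_one]
  field_simp

lemma tendsto_natCast_mul_sum_exp_neg_mul_atTop {ι : Type*} (s : Finset ι) {c : ι → ℝ}
    (hc : ∀ i ∈ s, 0 < c i) :
    Tendsto (fun n : ℕ ↦ n * ∑ i ∈ s, exp (-(c i * n))) atTop (𝓝 0) := by
  simp_rw [mul_sum]
  simpa using tendsto_finsetSum s fun i hi ↦ tendsto_natCast_mul_exp_neg_mul_atTop (hc i hi)

lemma ae_le_of_measure_Iio_eq_zero {ν : Measure ℝ} {a : ℝ} (h : ν (Set.Iio a) = 0) :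
    ∀ᵐ t ∂ν, a ≤ t := by
  rw [ae_iff]
  simp only [not_le]
  exact h

section InverseMoment

variable {ν : Measure ℝ} [IsProbabilityMeasure ν] {a : ℝ}

lemma integrable_one_div_of_ae_le (ha : 0 < a) (h : ∀ᵐ t ∂ν, a ≤ t) :
    Integrable (fun t ↦ 1 / t) ν :=
  Integrable.of_mem_Icc 0 (1 / a) (measurable_const.div measurable_id).aemeasurable <| by
    filter_upwards [h] with t ht
    exact ⟨one_div_nonneg.2 (ha.le.trans ht), one_div_le_one_div_of_le ha ht⟩

lemma integral_one_div_pos_of_ae_le (ha : 0 < a) (h : ∀ᵐ t ∂ν, a ≤ t) :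
    0 < ∫ t, 1 / t ∂ν := by
  have hpos : ∀ᵐ t ∂ν, 0 < 1 / t := by
    filter_upwards [h] with t ht using one_div_pos.2 (ha.trans_le ht)
  rw [integral_pos_iff_support_of_nonneg_ae (hpos.mono fun t ht ↦ ht.le)
    (integrable_one_div_of_ae_le ha h), pos_iff_ne_zero]
  intro hzero
  obtain ⟨t, ht, ht'⟩ := ((measure_eq_zero_iff_ae_notMem.1 hzero).and hpos).exists
  exact ht ht'.ne'

end InverseMoment

section Probability

variable {Ω : Type*} [MeasurableSpace Ω] {μ : Measure Ω} [IsProbabilityMeasure μ]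

lemma integral_le_add_mul_measureReal {F : Ω → ℝ} {B : Set Ω} {K c : ℝ}
    (hF : AEStronglyMeasurable F μ) (hB : MeasurableSet B) (h0 : ∀ᵐ ω ∂μ, 0 ≤ F ω)
    (hle : ∀ᵐ ω ∂μ, F ω ≤ K + B.indicator (fun _ ↦ c) ω) :
    ∫ ω, F ω ∂μ ≤ K + c * μ.real B := by
  have hG : Integrable (fun ω ↦ K + B.indicator (fun _ ↦ c) ω) μ :=
    (integrable_const K).add ((integrable_const c).indicator hB)
  have hFint : Integrable F μ := hG.mono' hF <| by
    filter_upwards [h0, hle] with ω h0 h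
    rwa [Real.norm_eq_abs, abs_of_nonneg h0]
  calc ∫ ω, F ω ∂μ ≤ ∫ ω, K + B.indicator (fun _ ↦ c) ω ∂μ := integral_mono_ae hFint hG hle
    _ = K + c * μ.real B := by
      rw [integral_add (integrable_const K) ((integrable_const c).indicator hB), integral_const,
        integral_indicator_const c hB]
      simp [mul_comm]

lemma measureReal_sum_le_mul_sub_le {Y : ℕ → Ω → ℝ}
    (hindep : iIndepFun Y μ) (hY : ∀ k, Measurable (Y k)) {a b e : ℝ}
    (hab : ∀ k, ∀ᵐ ω ∂μ, Y k ω ∈ Set.Icc a b) (hmean : ∀ k, μ[Y k] = e)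
    {ε : ℝ} (hε : 0 ≤ ε) (n : ℕ) :
    μ.real {ω | ∑ k ∈ range n, Y k ω ≤ n * (e - ε)}
      ≤ exp (-(2 * ε ^ 2 / (b - a) ^ 2 * n)) := by
  have hsubG : ∀ k < n, HasSubgaussianMGF (fun ω ↦ e - Y k ω)
      ((‖(e - a) - (e - b)‖₊ / 2) ^ 2) μ := fun k _ ↦ by
    refine hasSubgaussianMGF_of_mem_Icc_of_integral_eq_zero
      ((hY k).aemeasurable.const_sub e) ?_ ?_
    · filter_upwards [hab k] with ω ⟨hl, hu⟩ using ⟨by linarith, by linarith⟩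
    · rw [integral_sub (integrable_const e)
        (Integrable.of_mem_Icc a b (hY k).aemeasurable (hab k)), hmean k]
      simp
  have hindep' : iIndepFun (fun k ω ↦ e - Y k ω) μ :=
    hindep.comp (fun _ y ↦ e - y) fun _ ↦ measurable_const.sub measurable_id
  have hset : {ω | ∑ k ∈ range n, Y k ω ≤ n * (e - ε)}
      = {ω | n * ε ≤ ∑ k ∈ range n, (e - Y k ω)} := by
    ext ω
    simp only [Set.mem_ofPred_eq, sum_sub_distrib, sum_const, card_range, nsmul_eq_mul]
    constructor <;> intro h <;> linarith
  rw [hset]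
  refine (HasSubgaussianMGF.measure_sum_range_ge_le_of_iIndepFun hindep' hsubG
    (by positivity)).trans_eq ?_
  congr 1
  push_cast
  rw [Real.norm_eq_abs, div_pow, sq_abs]
  rcases eq_or_ne (n : ℝ) 0 with hn | hn
  · simp [hn]
  rcases eq_or_ne (b - a) 0 with hba | hba
  · simp [show e - a - (e - b) = 0 by linarith, hba]
  have : e - a - (e - b) = b - a := by ring
  rw [this]
  field_simp

variable {m : ℕ} {tmin : Fin m → ℝ} {D : Fin m → Measure ℝ} {X : ℕ → Fin m → Ω → ℝ}

omit [IsProbabilityMeasure μ] in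
lemma ae_forall_le_of_map_eq (hmeas : ∀ i j, Measurable (X i j))
    (hdist : ∀ i j, μ.map (X i j) = D j) (hsupp : ∀ j, D j (Set.Iio (tmin j)) = 0) :
    ∀ᵐ ω ∂μ, ∀ i j, tmin j ≤ X i j ω :=
  ae_all_iff.2 fun i ↦ ae_all_iff.2 fun j ↦ ae_of_ae_map (hmeas i j).aemeasurable <| by
    rw [hdist i j]
    exact ae_le_of_measure_Iio_eq_zero (hsupp j)

lemma measureReal_sum_one_div_le (hmeas : ∀ i j, Measurable (X i j))
    (hindep : iIndepFun (fun p : ℕ × Fin m ↦ X p.1 p.2) μ) (hdist : ∀ i j, μ.map (X i j) = D j)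
    (hmin : ∀ᵐ ω ∂μ, ∀ i j, tmin j ≤ X i j ω) (htmin : ∀ j, 0 < tmin j) (j : Fin m)
    {ε : ℝ} (hε : 0 ≤ ε) (n : ℕ) :
    μ.real {ω | ∑ k ∈ range n, 1 / X k j ω ≤ n * (∫ t, 1 / t ∂D j - ε)}
      ≤ exp (-(2 * ε ^ 2 * tmin j ^ 2 * n)) := by
  have hinv : Measurable fun x : ℝ ↦ 1 / x := measurable_const.div measurable_id
  have hindep_j : iIndepFun (fun k ω ↦ 1 / X k j ω) μ :=
    (hindep.precomp (g := fun k ↦ (k, j)) fun _ _ h ↦ (Prod.mk.inj h).1).comp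
      (fun _ x ↦ 1 / x) fun _ ↦ hinv
  have hbdd : ∀ k, ∀ᵐ ω ∂μ, 1 / X k j ω ∈ Set.Icc 0 (1 / tmin j) := fun k ↦ by
    filter_upwards [hmin] with ω hω
    exact ⟨one_div_nonneg.2 ((htmin j).le.trans (hω k j)),
      one_div_le_one_div_of_le (htmin j) (hω k j)⟩
  have hmean : ∀ k, ∫ ω, 1 / X k j ω ∂μ = ∫ t, 1 / t ∂D j := fun k ↦ by
    rw [← hdist k j, integral_map (hmeas k j).aemeasurable hinv.aestronglyMeasurable]
  refine (measureReal_sum_le_mul_sub_le hindep_j (fun k ↦ hinv.comp (hmeas k j)) hbdd hmean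
    hε n).trans_eq ?_
  have := (htmin j).ne'
  rw [sub_zero]
  field_simp

lemma integral_approxRatioP_le_add (hmeas : ∀ i j, Measurable (X i j))
    (hmin : ∀ᵐ ω ∂μ, ∀ i j, tmin j ≤ X i j ω) (htmin : ∀ j, 0 < tmin j)
    (htsum : 0 < ∑ j, tmin j) {a : Fin m → ℝ} (ha : ∀ j, 0 < a j) (n : ℕ) :
    ∫ ω, approxRatioP (fun j (i : Fin n) ↦ X i j ω) ∂μ
      ≤ (∑ j, (a j)⁻¹) / (∑ j, tmin j)
        + n * ∑ j, μ.real {ω | ∑ k ∈ range n, 1 / X k j ω ≤ n * a j} := by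
  set B := ⋃ j, {ω | ∑ k ∈ range n, 1 / X k j ω ≤ n * a j}
  have hB : MeasurableSet B := MeasurableSet.iUnion fun j ↦
    measurableSet_le (Finset.measurable_sum _ fun k _ ↦ measurable_const.div (hmeas k j))
      measurable_const
  have hF : Measurable fun ω ↦ approxRatioP (fun j (i : Fin n) ↦ X i j ω) := by
    unfold approxRatioP SCP
    fun_prop
  refine (integral_le_add_mul_measureReal (K := (∑ j, (a j)⁻¹) / ∑ j, tmin j) (c := n)
    hF.aestronglyMeasurable hB ?_ ?_).trans ?_
  · filter_upwards [hmin] with ω hω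
    exact approxRatioP_nonneg fun j i ↦ (htmin j).le.trans (hω i j)
  · filter_upwards [hmin] with ω hω
    by_cases hω' : ω ∈ B
    · rw [Set.indicator_of_mem hω']
      exact (approxRatioP_le_natCast fun j i ↦ (htmin j).trans_le (hω i j)).trans
        (le_add_of_nonneg_left (div_nonneg (sum_nonneg fun j _ ↦ (inv_pos.2 (ha j)).le) htsum.le))
    · rw [Set.indicator_of_notMem hω', add_zero]
      refine approxRatioP_le_of_mul_le_sum htsum (fun j i ↦ hω i j) ha fun j ↦ ?_
      simp only [B, Set.mem_iUnion, Set.mem_ofPred_eq, not_exists, not_le] at hω'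
      rw [Fin.sum_univ_eq_sum_range (fun k ↦ 1 / X k j ω)]
      exact (hω' j).le
  · gcongr
    exact measureReal_iUnion_fintype_le _

end Probability

theorem mechanismP_average_ratio_limsup_le_general
    {Ω : Type*} [MeasureSpace Ω] [IsProbabilityMeasure (ℙ : Measure Ω)]
    (m : ℕ) (hm : 1 ≤ m)
    (tmin : Fin m → ℝ) (htmin : ∀ j, 0 < tmin j)
    (D : Fin m → Measure ℝ) (hprob : ∀ j, IsProbabilityMeasure (D j))
    (hsupp : ∀ j, D j (Set.Iio (tmin j)) = 0)
    (X : ℕ → Fin m → Ω → ℝ)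
    (hmeas : ∀ i j, Measurable (X i j))
    (hindep : iIndepFun (fun p : ℕ × Fin m => X p.1 p.2) ℙ)
    (hdist : ∀ i j, Measure.map (X i j) ℙ = D j)
    (r : ℕ → ℝ)
    (hr : ∀ n, r n = ∫ ω, (∑ j, SCP n (fun i : Fin n => X i j ω)) /
        (∑ j, ⨅ i : Fin n, X i j ω) ∂ℙ) :
    limsup r atTop ≤ (∑ j, (∫ t, 1 / t ∂(D j))⁻¹) / (∑ j, tmin j) := by
  set E : Fin m → ℝ := fun j ↦ ∫ t, 1 / t ∂(D j)
  have hE : ∀ j, 0 < E j := fun j ↦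
    have := hprob j
    integral_one_div_pos_of_ae_le (htmin j) (ae_le_of_measure_Iio_eq_zero (hsupp j))
  have hmin := ae_forall_le_of_map_eq hmeas hdist hsupp
  have htsum : 0 < ∑ j, tmin j := sum_pos (fun j _ ↦ htmin j) ⟨⟨0, hm⟩, mem_univ _⟩
  have hbound : ∀ ε, 0 < ε → (∀ j, ε < E j) →
      limsup r atTop ≤ (∑ j, (E j - ε)⁻¹) / ∑ j, tmin j := fun ε hε hεE ↦ by
    refine limsup_le_of_le_add_of_tendsto_zero (fun n ↦ ?_) (fun n ↦ ?_)
      (tendsto_natCast_mul_sum_exp_neg_mul_atTop univ (c := fun j ↦ 2 * ε ^ 2 * tmin j ^ 2)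
        fun j _ ↦ by have := htmin j; positivity)
    · rw [hr n]
      exact integral_nonneg_of_ae <| hmin.mono fun ω hω ↦
        approxRatioP_nonneg fun j i ↦ (htmin j).le.trans (hω i j)
    · rw [hr n]
      refine (integral_approxRatioP_le_add hmeas hmin htmin htsum
        (fun j ↦ sub_pos.2 (hεE j)) n).trans ?_
      gcongr with j
      exact measureReal_sum_one_div_le hmeas hindep hdist hmin htmin j hε.le n
  have hlim : Tendsto (fun ε ↦ (∑ j, (E j - ε)⁻¹) / ∑ j, tmin j) (𝓝[>] 0)
      (𝓝 ((∑ j, (E j)⁻¹) / ∑ j, tmin j)) := by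
    refine ((tendsto_finsetSum _ fun j _ ↦ ?_).div_const _).mono_left nhdsWithin_le_nhds
    simpa using ((tendsto_const_nhds (x := E j)).sub (tendsto_id (x := 𝓝 0))).inv₀
      (by simpa using (hE j).ne')
  have hsmall : ∀ᶠ ε in 𝓝[>] 0, 0 < ε ∧ ∀ j, ε < E j :=
    eventually_mem_nhdsWithin.and
      (nhdsWithin_le_nhds (eventually_all.2 fun j ↦ eventually_lt_nhds (hE j)))
  exact ge_of_tendsto hlim (hsmall.mono fun ε hε ↦ hbound ε hε.1 hε.2)

/-- With `m ≥ 1` tasks, costs `X i j ∼ D j` mutually independent, `D j` a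
probability distribution on `[tmin j, ∞)` whose CDF is positive just above `tmin j`, the
average-case approximation ratio `r_n(P) = E[(∑_j SC_P(t^j)) / (∑_j min_i t_i^j)]` of
mechanism P satisfies `limsup_{n→∞} r_n(P) ≤ (∑_j (E_{t∼D^j}[1/t])⁻¹) / (∑_j tmin j)`. -/
theorem mechanismP_average_ratio_limsup_le
    {Ω : Type*} [MeasureSpace Ω] [IsProbabilityMeasure (ℙ : Measure Ω)]
    (m : ℕ) (hm : 1 ≤ m)
    (tmin : Fin m → ℝ) (htmin : ∀ j, 0 < tmin j)
    (D : Fin m → Measure ℝ) (hprob : ∀ j, IsProbabilityMeasure (D j))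
    (hsupp : ∀ j, D j (Set.Iio (tmin j)) = 0)
    (hcdf : ∀ j, ∀ δ : ℝ, 0 < δ → 0 < D j (Set.Iic (tmin j + δ)))
    (X : ℕ → Fin m → Ω → ℝ)
    (hmeas : ∀ i j, Measurable (X i j))
    (hindep : iIndepFun (fun p : ℕ × Fin m => X p.1 p.2) ℙ)
    (hdist : ∀ i j, Measure.map (X i j) ℙ = D j)
    (r : ℕ → ℝ)
    (hr : ∀ n, r n = ∫ ω, (∑ j, SCP n (fun i : Fin n => X i j ω)) /
        (∑ j, ⨅ i : Fin n, X i j ω) ∂ℙ) :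
    limsup r atTop ≤ (∑ j, (∫ t, 1 / t ∂(D j))⁻¹) / (∑ j, tmin j) :=
  mechanismP_average_ratio_limsup_le_general m hm tmin htmin D hprob hsupp X hmeas hindep hdist r hr
end
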